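/- arXiv:1803.02438 — 5 statements merged into one kernel-verified Lean document; each statement's English description precedes it below -/
import Mathlib

section
/- Let X(1), X(2), … be a sequence of real m×n matrices admitting a minimal realization of dimension d: there exist A ∈ ℝ^{m×d}, B ∈ ℝ^{d×d}, C ∈ ℝ^{d×n} with X(t+1) = A·B^t·C for all t ≥ 0, such that the controllability matrix obtained by stacking the rows A, AB, …, AB^{d−1} has rank d and the observability matrix obtained by concatenating the columns C, BC, …, B^{d−1}C has rank d. Let r = sup over t ≥ 1 of rank X(t). Then for every l ≥ d − r, the block Hankel matrix H^(1;l) has rank exactly d. (Lemma 1, rank statement.) -/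
/-- The block Hankel matrix `H^(t;k)` of a sequence of `m×n` matrices `X(1), X(2), …`:
the `(k+1)×(k+1)` block matrix whose `(i,j)` block is `X(t+i+j)` for `0 ≤ i,j ≤ k`. -/
def blockHankel {m n : ℕ} (X : ℕ → Matrix (Fin m) (Fin n) ℝ) (t k : ℕ) :
    Matrix (Fin (k + 1) × Fin m) (Fin (k + 1) × Fin n) ℝ :=
  Matrix.of fun p q => X (t + (p.1 : ℕ) + (q.1 : ℕ)) p.2 q.2

/-- The controllability matrix of a realization `(A, B, C)`: the matrix obtained by
stacking the rows of `A, AB, …, AB^{d-1}`. -/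
def controllabilityMatrix {m d : ℕ} (A : Matrix (Fin m) (Fin d) ℝ)
    (B : Matrix (Fin d) (Fin d) ℝ) : Matrix (Fin d × Fin m) (Fin d) ℝ :=
  Matrix.of fun p c => (A * B ^ (p.1 : ℕ)) p.2 c

/-- The observability matrix of a realization `(A, B, C)`: the matrix obtained by
concatenating the columns of `C, BC, …, B^{d-1}C`. -/
def observabilityMatrix {n d : ℕ} (B : Matrix (Fin d) (Fin d) ℝ)
    (C : Matrix (Fin d) (Fin n) ℝ) : Matrix (Fin d) (Fin d × Fin n) ℝ :=
  Matrix.of fun c q => (B ^ (q.1 : ℕ) * C) c q.2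

/-! The columns of `C, BC, …, B^(k-1) C` span the Krylov spaces `K_1 ≤ K_2 ≤ ⋯`. Once
`K_(k+1) = K_k`, the space `K_k` is `B`-invariant and therefore contains every `B^j C`, so by
observability it is all of `ℝ^d`. Hence the dimension grows by at least one per step until it
reaches `d`; as `dim K_1 = rank C ≥ r`, already `K_(l+1) = ℝ^d` when `l ≥ d - r`. The same holds
for `(Bᵀ, Aᵀ)` by controllability, and `H^(1;l)` is the product of the transposed Krylov matrix of
`(Bᵀ, Aᵀ)` with that of `(B, C)`, both of rank `d`. -/

open Matrix Module

theorem Submodule.le_finrank_of_monotone_of_stable_eq_top {K V : Type*} [DivisionRing K]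
    [AddCommGroup V] [Module K V] [FiniteDimensional K V] (S : ℕ → Submodule K V)
    (hmono : Monotone S) (hstable : ∀ k, S (k + 1) ≤ S k → S k = ⊤) (k : ℕ) :
    min (finrank K V) (finrank K (S 0) + k) ≤ finrank K (S k) := by
  induction k with
  | zero => exact min_le_right _ _
  | succ k ih =>
    by_cases hk : S (k + 1) ≤ S k
    · have htop : S (k + 1) = ⊤ := top_le_iff.mp (hstable k hk ▸ hmono (k.le_add_right 1))
      rw [htop, finrank_top]
      exact min_le_left _ _
    · have := Submodule.finrank_lt_finrank_of_lt (lt_of_le_not_ge (hmono (k.le_add_right 1)) hk)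
      omega

theorem Matrix.rank_mul_eq_left_of_rank_eq_card {K m n o : Type*} [Field K] [Fintype n]
    [Fintype o] (P : Matrix m n K) {Q : Matrix n o K} (hQ : Q.rank = Fintype.card n) :
    (P * Q).rank = P.rank := by
  have hQtop : LinearMap.range Q.mulVecLin = ⊤ :=
    Submodule.eq_top_of_finrank_eq (by rw [finrank_fintype_fun_eq_card]; exact hQ)
  rw [rank, rank, mulVecLin_mul, LinearMap.range_comp, hQtop, Submodule.map_top]

namespace Matrix

variable {K ι κ : Type*} [Field K] [Fintype ι] [DecidableEq ι] [Fintype κ]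
  (B : Matrix ι ι K) (C : Matrix ι κ K)

def krylovSpace (k : ℕ) : Submodule K (ι → K) :=
  ⨆ i < k, LinearMap.range (B ^ i * C).mulVecLin

def krylovMatrix (k : ℕ) : Matrix ι (Fin k × κ) K :=
  of fun c q => (B ^ (q.1 : ℕ) * C) c q.2

theorem range_pow_mul_le_krylovSpace {i k : ℕ} (h : i < k) :
    LinearMap.range (B ^ i * C).mulVecLin ≤ krylovSpace B C k :=
  le_iSup₂ (f := fun i (_ : i < k) => LinearMap.range (B ^ i * C).mulVecLin) i h

theorem krylovSpace_le_iff {k : ℕ} {T : Submodule K (ι → K)} :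
    krylovSpace B C k ≤ T ↔ ∀ i < k, LinearMap.range (B ^ i * C).mulVecLin ≤ T :=
  iSup₂_le_iff

theorem krylovSpace_mono : Monotone (krylovSpace B C) := fun _ _ hkk' =>
  (krylovSpace_le_iff B C).2 fun _ hi => range_pow_mul_le_krylovSpace B C (hi.trans_le hkk')

theorem range_krylovMatrix (k : ℕ) :
    LinearMap.range (krylovMatrix B C k).mulVecLin = krylovSpace B C k := by
  refine le_antisymm ?_ ((krylovSpace_le_iff B C).2 fun i hi => ?_)
  · rw [range_mulVecLin]
    refine Submodule.span_le.2 ?_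
    rintro _ ⟨⟨i, q⟩, rfl⟩
    refine range_pow_mul_le_krylovSpace B C i.isLt ?_
    rw [range_mulVecLin]
    exact Submodule.subset_span ⟨q, rfl⟩
  · rw [range_mulVecLin, range_mulVecLin]
    refine Submodule.span_mono ?_
    rintro _ ⟨q, rfl⟩
    exact ⟨(⟨i, hi⟩, q), rfl⟩

theorem range_pow_succ_mul (i : ℕ) :
    LinearMap.range (B ^ (i + 1) * C).mulVecLin =
      (LinearMap.range (B ^ i * C).mulVecLin).map B.mulVecLin := by
  rw [pow_succ', Matrix.mul_assoc, mulVecLin_mul, LinearMap.range_comp]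

theorem map_krylovSpace_le (k : ℕ) :
    (krylovSpace B C k).map B.mulVecLin ≤ krylovSpace B C (k + 1) := by
  refine Submodule.map_le_iff_le_comap.2 <| (krylovSpace_le_iff B C).2 fun i hi => ?_
  rw [← Submodule.map_le_iff_le_comap, ← range_pow_succ_mul]
  exact range_pow_mul_le_krylovSpace B C (Nat.succ_lt_succ hi)

theorem krylovSpace_le_of_succ_le {k : ℕ} (hk : krylovSpace B C (k + 1) ≤ krylovSpace B C k)
    (j : ℕ) : krylovSpace B C j ≤ krylovSpace B C k := by
  have hrange : ∀ i, LinearMap.range (B ^ i * C).mulVecLin ≤ krylovSpace B C k := by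
    intro i
    induction i with
    | zero => exact (range_pow_mul_le_krylovSpace B C k.succ_pos).trans hk
    | succ i ih =>
      rw [range_pow_succ_mul]
      exact ((Submodule.map_mono ih).trans (map_krylovSpace_le B C k)).trans hk
  exact (krylovSpace_le_iff B C).2 fun i _ => hrange i

theorem rank_krylovMatrix_eq_card {N : ℕ} (hN : (krylovMatrix B C N).rank = Fintype.card ι)
    {l : ℕ} (hl : Fintype.card ι ≤ C.rank + l) :
    (krylovMatrix B C (l + 1)).rank = Fintype.card ι := by
  have hNtop : krylovSpace B C N = ⊤ := by
    rw [← range_krylovMatrix]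
    exact Submodule.eq_top_of_finrank_eq (by rw [finrank_fintype_fun_eq_card]; exact hN)
  have hC : krylovSpace B C 1 = LinearMap.range C.mulVecLin := by
    refine le_antisymm ((krylovSpace_le_iff B C).2 fun i hi => ?_) ?_
    · obtain rfl : i = 0 := Nat.lt_one_iff.mp hi
      rw [pow_zero, Matrix.one_mul]
    · simpa using range_pow_mul_le_krylovSpace B C one_pos
  have hgrowth := Submodule.le_finrank_of_monotone_of_stable_eq_top
    (fun k => krylovSpace B C (k + 1)) (fun _ _ h => krylovSpace_mono B C (Nat.succ_le_succ h))
    (fun k hk => top_le_iff.mp (hNtop ▸ krylovSpace_le_of_succ_le B C hk N)) l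
  rw [finrank_fintype_fun_eq_card, zero_add, hC, ← range_krylovMatrix] at hgrowth
  exact le_antisymm (rank_le_card_height _) (min_eq_left hl ▸ hgrowth)

end Matrix

theorem observabilityMatrix_eq_krylovMatrix {n d : ℕ} (B : Matrix (Fin d) (Fin d) ℝ)
    (C : Matrix (Fin d) (Fin n) ℝ) : observabilityMatrix B C = krylovMatrix B C d :=
  rfl

theorem controllabilityMatrix_eq_transpose_krylovMatrix {m d : ℕ} (A : Matrix (Fin m) (Fin d) ℝ)
    (B : Matrix (Fin d) (Fin d) ℝ) : controllabilityMatrix A B = (krylovMatrix Bᵀ Aᵀ d)ᵀ := by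
  ext ⟨i, p⟩ c
  simp [controllabilityMatrix, krylovMatrix, ← transpose_pow, ← transpose_mul]

theorem blockHankel_one_eq_mul {m n d : ℕ} {X : ℕ → Matrix (Fin m) (Fin n) ℝ}
    {A : Matrix (Fin m) (Fin d) ℝ} {B : Matrix (Fin d) (Fin d) ℝ} {C : Matrix (Fin d) (Fin n) ℝ}
    (hX : ∀ t : ℕ, X (t + 1) = A * B ^ t * C) (l : ℕ) :
    blockHankel X 1 l = (krylovMatrix Bᵀ Aᵀ (l + 1))ᵀ * krylovMatrix B C (l + 1) := by
  ext ⟨i, p⟩ ⟨j, q⟩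
  rw [blockHankel, of_apply, show 1 + (i : ℕ) + j = i + j + 1 by omega, hX, pow_add,
    ← Matrix.mul_assoc, Matrix.mul_assoc _ _ C, mul_apply, mul_apply]
  simp [krylovMatrix, ← transpose_pow, ← transpose_mul]

theorem blockHankel_rank_eq_of_minimal_general (m n d : ℕ)
    (X : ℕ → Matrix (Fin m) (Fin n) ℝ)
    (A : Matrix (Fin m) (Fin d) ℝ) (B : Matrix (Fin d) (Fin d) ℝ)
    (C : Matrix (Fin d) (Fin n) ℝ)
    (hX : ∀ t : ℕ, X (t + 1) = A * B ^ t * C)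
    (hctrl : (controllabilityMatrix A B).rank = d)
    (hobs : (observabilityMatrix B C).rank = d)
    (r : ℕ) (hr : r = ⨆ t : ℕ, (X (t + 1)).rank)
    (l : ℕ) (hl : d - r ≤ l) :
    (blockHankel X 1 l).rank = d := by
  have hrC : r ≤ C.rank := hr ▸ ciSup_le fun t => hX t ▸ rank_mul_le_right _ _
  have hrA : r ≤ Aᵀ.rank := rank_transpose A ▸ hr ▸ ciSup_le fun t =>
    hX t ▸ (rank_mul_le_left _ _).trans (rank_mul_le_left _ _)
  have hO : (krylovMatrix B C (l + 1)).rank = Fintype.card (Fin d) :=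
    rank_krylovMatrix_eq_card B C
      (by rw [Fintype.card_fin, ← observabilityMatrix_eq_krylovMatrix, hobs])
      (by rw [Fintype.card_fin]; omega)
  have hΓ : (krylovMatrix Bᵀ Aᵀ (l + 1)).rank = Fintype.card (Fin d) :=
    rank_krylovMatrix_eq_card Bᵀ Aᵀ (N := d)
      (by rw [← rank_transpose, ← controllabilityMatrix_eq_transpose_krylovMatrix, hctrl,
        Fintype.card_fin])
      (by rw [Fintype.card_fin]; omega)
  rw [blockHankel_one_eq_mul hX, rank_mul_eq_left_of_rank_eq_card _ hO, rank_transpose, hΓ,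
    Fintype.card_fin]

/-- **Lemma 1 (rank statement).**
Let `X(1), X(2), …` admit a minimal realization of dimension `d`
(`X(t+1) = A·B^t·C` for all `t ≥ 0`, with controllability and observability matrices
of rank `d`), and let `r = sup_{t ≥ 1} rank X(t)`. Then for every `l ≥ d - r`,
the block Hankel matrix `H^(1;l)` has rank exactly `d`. -/
theorem blockHankel_rank_eq_of_minimal (m n d : ℕ) (hm : 0 < m) (hn : 0 < n) (hd : 0 < d)
    (X : ℕ → Matrix (Fin m) (Fin n) ℝ)
    (A : Matrix (Fin m) (Fin d) ℝ) (B : Matrix (Fin d) (Fin d) ℝ)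
    (C : Matrix (Fin d) (Fin n) ℝ)
    (hX : ∀ t : ℕ, X (t + 1) = A * B ^ t * C)
    (hctrl : (controllabilityMatrix A B).rank = d)
    (hobs : (observabilityMatrix B C).rank = d)
    (r : ℕ) (hr : r = ⨆ t : ℕ, (X (t + 1)).rank)
    (l : ℕ) (hl : d - r ≤ l) :
    (blockHankel X 1 l).rank = d :=
  blockHankel_rank_eq_of_minimal_general m n d X A B C hX hctrl hobs r hr l hl
end

section
/- Let X(1), X(2), … be a sequence of real m×n matrices admitting a minimal realization of dimension d (matrices A ∈ ℝ^{m×d}, B ∈ ℝ^{d×d}, C ∈ ℝ^{d×n} with X(t+1) = A·B^t·C for all t ≥ 0, controllability matrix [A; AB; …; AB^{d−1}] of rank d, observability matrix [C, BC, …, B^{d−1}C] of rank d). Let r = sup over t ≥ 1 of rank X(t), let l ≥ d − r, and suppose L̂ ∈ ℝ^{m(l+1)×d} and R̂ ∈ ℝ^{d×n(l+1)} satisfy L̂·R̂ = H^(1;l), and B̂ ∈ ℝ^{d×d} satisfies L̂·B̂·R̂ = H^(2;l). Let Â be the matrix of the first m rows of L̂ and Ĉ the matrix of the first n columns of R̂.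 Then X(t+1) = Â·B̂^t·Ĉ for all t ≥ 0. That is, a complete minimal model of the system can be constructed from the observations X(1), …, X(2l+2) via any rank-d factorization of H^(1;l). (Lemma 1, reconstruction statement.) -/
/-!
Put `O = [A; AB; …; ABˡ]` and `Q = [C, BC, …, BˡC]`, so that `H^(1;l) = O Q` and
`H^(2;l) = O B Q`. The kernels of `[A; …; AB^(k-1)]` decrease strictly until they vanish (once
two consecutive ones agree, all later ones do), and the first one has dimension
`d - rank A ≤ d - r ≤ l`; hence `O` has a left inverse, and dually `Q` a right inverse. Then
`L̂ R̂ = O Q` forces `L̂ = O T`, `R̂ = T⁻¹ Q` for an invertible `T`, and `L̂ B̂ R̂ = O B Q` forces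
`B̂ = T⁻¹ B T`, so `(Â, B̂, Ĉ) = (A T, T⁻¹ B T, T⁻¹ C)` realizes the same sequence.
-/

open Matrix Module LinearMap

namespace HoKalman

variable {K : Type*} [Field K] {ι μ ν : Type*} [Fintype ι]

theorem finrank_ker_add_rank {κ : Type*} (M : Matrix κ ι K) :
    finrank K (ker M.mulVecLin) + M.rank = Fintype.card ι := by
  rw [Matrix.rank, add_comm, LinearMap.finrank_range_add_finrank_ker, finrank_fintype_fun_eq_card]

theorem ker_mulVecLin_eq_bot_of_rank_eq {κ : Type*} {M : Matrix κ ι K}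
    (h : M.rank = Fintype.card ι) : ker M.mulVecLin = ⊥ := by
  have := finrank_ker_add_rank M
  exact Submodule.finrank_eq_zero.mp (by omega)

theorem exists_mul_eq_one_of_ker_eq_bot [DecidableEq ι] {κ : Type*} [Fintype κ] [DecidableEq κ]
    {M : Matrix κ ι K} (h : ker M.mulVecLin = ⊥) : ∃ G : Matrix ι κ K, G * M = 1 := by
  obtain ⟨g, hg⟩ := M.mulVecLin.exists_leftInverse_of_injective h
  refine ⟨LinearMap.toMatrix' g, ?_⟩
  rw [← LinearMap.toMatrix'_id, ← hg, LinearMap.toMatrix'_comp, ← Matrix.toLin'_apply',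
    LinearMap.toMatrix'_toLin']

variable [DecidableEq ι]

def krylovRows (A : Matrix μ ι K) (B : Matrix ι ι K) (k : ℕ) : Matrix (Fin k × μ) ι K :=
  Matrix.of fun p c => (A * B ^ (p.1 : ℕ)) p.2 c

def krylovCols (B : Matrix ι ι K) (C : Matrix ι ν K) (k : ℕ) : Matrix ι (Fin k × ν) K :=
  Matrix.of fun c q => (B ^ (q.1 : ℕ) * C) c q.2

theorem krylovRows_mul_apply {κ : Type*} (A : Matrix μ ι K) (B : Matrix ι ι K) (k : ℕ)
    (M : Matrix ι κ K) (p : Fin k × μ) (c : κ) :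
    (krylovRows A B k * M) p c = (A * B ^ (p.1 : ℕ) * M) p.2 c :=
  rfl

theorem mul_krylovCols_apply {κ : Type*} (B : Matrix ι ι K) (C : Matrix ι ν K) (k : ℕ)
    (M : Matrix κ ι K) (c : κ) (q : Fin k × ν) :
    (M * krylovCols B C k) c q = (M * (B ^ (q.1 : ℕ) * C)) c q.2 :=
  rfl

theorem krylovCols_eq_transpose (B : Matrix ι ι K) (C : Matrix ι ν K) (k : ℕ) :
    krylovCols B C k = (krylovRows Cᵀ Bᵀ k)ᵀ := by
  ext c q
  simp [krylovCols, krylovRows, ← transpose_pow, ← transpose_mul]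

variable {A : Matrix μ ι K} {B : Matrix ι ι K}

theorem mem_ker_krylovRows {k : ℕ} {x : ι → K} :
    x ∈ ker (krylovRows A B k).mulVecLin ↔ ∀ i : Fin k, (A * B ^ (i : ℕ)) *ᵥ x = 0 := by
  simp only [mem_ker, mulVecLin_apply, funext_iff, Prod.forall]
  rfl

theorem mem_ker_krylovRows_succ {k : ℕ} {x : ι → K} :
    x ∈ ker (krylovRows A B (k + 1)).mulVecLin ↔
      A *ᵥ x = 0 ∧ B *ᵥ x ∈ ker (krylovRows A B k).mulVecLin := by
  simp only [mem_ker_krylovRows, Fin.forall_fin_succ, Fin.val_zero, pow_zero, Matrix.mul_one,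
    Fin.val_succ, pow_succ, mulVec_mulVec, Matrix.mul_assoc]

theorem ker_krylovRows_zero : ker (krylovRows A B 0).mulVecLin = ⊤ :=
  Submodule.eq_top_iff'.mpr fun _ => mem_ker_krylovRows.mpr fun i => i.elim0

theorem ker_krylovRows_one : ker (krylovRows A B 1).mulVecLin = ker A.mulVecLin := by
  ext x
  rw [mem_ker_krylovRows_succ, ker_krylovRows_zero]
  simp

theorem ker_krylovRows_antitone : Antitone fun k => ker (krylovRows A B k).mulVecLin := by
  intro j k hjk x hx
  rw [mem_ker_krylovRows] at hx ⊢
  exact fun i => hx (Fin.castLE hjk i)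

theorem ker_krylovRows_eq_of_succ_eq {k : ℕ}
    (h : ker (krylovRows A B (k + 1)).mulVecLin = ker (krylovRows A B k).mulVecLin)
    {j : ℕ} (hkj : k ≤ j) :
    ker (krylovRows A B j).mulVecLin = ker (krylovRows A B k).mulVecLin := by
  induction j, hkj using Nat.le_induction with
  | base => rfl
  | succ j hkj ih =>
    rw [← h]
    ext x
    rw [mem_ker_krylovRows_succ, mem_ker_krylovRows_succ, ih]

theorem ker_krylovRows_succ_lt {N k : ℕ} (hN : ker (krylovRows A B N).mulVecLin = ⊥)
    (hk : ker (krylovRows A B (k + 1)).mulVecLin ≠ ⊥) :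
    ker (krylovRows A B (k + 1)).mulVecLin < ker (krylovRows A B k).mulVecLin := by
  refine lt_of_le_of_ne (ker_krylovRows_antitone k.le_succ) fun h => hk ?_
  have := ker_krylovRows_eq_of_succ_eq h (le_max_left k N)
  rw [h, ← this, eq_bot_iff, ← hN]
  exact ker_krylovRows_antitone (le_max_right k N)

theorem finrank_ker_krylovRows_le {N : ℕ} (hN : ker (krylovRows A B N).mulVecLin = ⊥)
    (k : ℕ) :
    finrank K (ker (krylovRows A B (k + 1)).mulVecLin) ≤ finrank K (ker A.mulVecLin) - k := by
  induction k with
  | zero => rw [ker_krylovRows_one]; rfl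
  | succ k ih =>
    by_cases hk : ker (krylovRows A B (k + 1 + 1)).mulVecLin = ⊥
    · rw [hk, finrank_bot]
      exact Nat.zero_le _
    · have := Submodule.finrank_lt_finrank_of_lt (ker_krylovRows_succ_lt hN hk)
      omega

theorem ker_krylovRows_eq_bot {N l : ℕ} (hN : ker (krylovRows A B N).mulVecLin = ⊥)
    (hl : Fintype.card ι - A.rank ≤ l) : ker (krylovRows A B (l + 1)).mulVecLin = ⊥ := by
  have := finrank_ker_krylovRows_le hN l
  have := finrank_ker_add_rank A
  exact Submodule.finrank_eq_zero.mp (by omega)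

theorem exists_mul_krylovRows_eq_one [Fintype μ] [DecidableEq μ] {N l : ℕ}
    (hN : (krylovRows A B N).rank = Fintype.card ι) (hl : Fintype.card ι - A.rank ≤ l) :
    ∃ G : Matrix ι (Fin (l + 1) × μ) K, G * krylovRows A B (l + 1) = 1 :=
  exists_mul_eq_one_of_ker_eq_bot (ker_krylovRows_eq_bot (ker_mulVecLin_eq_bot_of_rank_eq hN) hl)

theorem exists_krylovCols_mul_eq_one [Fintype ν] [DecidableEq ν] {C : Matrix ι ν K} {N l : ℕ}
    (hN : (krylovCols B C N).rank = Fintype.card ι) (hl : Fintype.card ι - C.rank ≤ l) :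
    ∃ G : Matrix (Fin (l + 1) × ν) ι K, krylovCols B C (l + 1) * G = 1 := by
  have hN' : (krylovRows Cᵀ Bᵀ N).rank = Fintype.card ι := by
    rwa [← rank_transpose, ← krylovCols_eq_transpose]
  obtain ⟨G, hG⟩ := exists_mul_krylovRows_eq_one (l := l) hN' (by rwa [rank_transpose])
  exact ⟨Gᵀ, by rw [krylovCols_eq_transpose, ← transpose_mul, hG, transpose_one]⟩

theorem iSup_rank_le_rank_left [Fintype ν] {C : Matrix ι ν K} {X : ℕ → Matrix μ ν K}
    (hX : ∀ t, X (t + 1) = A * B ^ t * C) : ⨆ t, (X (t + 1)).rank ≤ A.rank :=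
  ciSup_le fun t => hX t ▸ (rank_mul_le_left _ _).trans (rank_mul_le_left _ _)

theorem iSup_rank_le_rank_right [Fintype ν] {C : Matrix ι ν K} {X : ℕ → Matrix μ ν K}
    (hX : ∀ t, X (t + 1) = A * B ^ t * C) : ⨆ t, (X (t + 1)).rank ≤ C.rank :=
  ciSup_le fun t => hX t ▸ rank_mul_le_right _ _

theorem exists_similarity_of_factorizations {ρ κ : Type*} [Fintype ρ] [Fintype κ]
    {O L : Matrix ρ ι K} {Q R : Matrix ι κ K} {B' : Matrix ι ι K}
    (hO : ∃ O' : Matrix ι ρ K, O' * O = 1) (hQ : ∃ Q' : Matrix κ ι K, Q * Q' = 1)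
    (hfact : L * R = O * Q) (hshift : L * B' * R = O * B * Q) :
    ∃ T : (Matrix ι ι K)ˣ, L = O * (T : Matrix ι ι K) ∧ R = (↑T⁻¹ : Matrix ι ι K) * Q ∧
      B' = (↑T⁻¹ : Matrix ι ι K) * B * T := by
  obtain ⟨O', hO'⟩ := hO
  obtain ⟨Q', hQ'⟩ := hQ
  have hLS : L * (R * Q') = O := by
    rw [← Matrix.mul_assoc, hfact, Matrix.mul_assoc, hQ', Matrix.mul_one]
  have hTR : O' * L * R = Q := by
    rw [Matrix.mul_assoc, hfact, ← Matrix.mul_assoc, hO', Matrix.one_mul]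
  have hTS : O' * L * (R * Q') = 1 := by
    rw [Matrix.mul_assoc, hLS, hO']
  have hST : R * Q' * (O' * L) = 1 := mul_eq_one_comm.mp hTS
  have hTBS : O' * L * B' * (R * Q') = B := by
    calc O' * L * B' * (R * Q') = O' * (L * B' * R) * Q' := by simp only [Matrix.mul_assoc]
      _ = O' * O * B * (Q * Q') := by rw [hshift]; simp only [Matrix.mul_assoc]
      _ = B := by rw [hO', hQ', Matrix.one_mul, Matrix.mul_one]
  refine ⟨⟨O' * L, R * Q', hTS, hST⟩, ?_, ?_, ?_⟩
  · calc L = L * (R * Q' * (O' * L)) := by rw [hST, Matrix.mul_one]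
      _ = O * (O' * L) := by rw [← Matrix.mul_assoc, hLS]
  · calc R = R * Q' * (O' * L) * R := by rw [hST, Matrix.one_mul]
      _ = R * Q' * Q := by rw [Matrix.mul_assoc, hTR]
  · calc B' = R * Q' * (O' * L) * B' * (R * Q' * (O' * L)) := by
          rw [hST, Matrix.one_mul, Matrix.mul_one]
      _ = R * Q' * (O' * L * B' * (R * Q')) * (O' * L) := by simp only [Matrix.mul_assoc]
      _ = R * Q' * B * (O' * L) := by rw [hTBS]

end HoKalman

open HoKalman

theorem blockHankel_eq_krylovRows_mul_krylovCols {ι : Type*} [Fintype ι] [DecidableEq ι]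
    {m n : ℕ} {X : ℕ → Matrix (Fin m) (Fin n) ℝ} {A : Matrix (Fin m) ι ℝ}
    {B : Matrix ι ι ℝ} {C : Matrix ι (Fin n) ℝ} (hX : ∀ t, X (t + 1) = A * B ^ t * C)
    (s l : ℕ) :
    blockHankel X (s + 1) l = krylovRows A B (l + 1) * B ^ s * krylovCols B C (l + 1) := by
  ext ⟨i, a⟩ ⟨j, b⟩
  rw [mul_krylovCols_apply, Matrix.mul_assoc, krylovRows_mul_apply]
  have hidx : s + 1 + (i : ℕ) + j = (i + s + j) + 1 := by omega
  simp only [blockHankel, of_apply, hidx, hX, pow_add, Matrix.mul_assoc]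

theorem hoKalman_reconstruction_general (m n d : ℕ)
    (X : ℕ → Matrix (Fin m) (Fin n) ℝ)
    (A : Matrix (Fin m) (Fin d) ℝ) (B : Matrix (Fin d) (Fin d) ℝ)
    (C : Matrix (Fin d) (Fin n) ℝ)
    (hX : ∀ t : ℕ, X (t + 1) = A * B ^ t * C)
    (hctrl : (controllabilityMatrix A B).rank = d)
    (hobs : (observabilityMatrix B C).rank = d)
    (r : ℕ) (hr : r = ⨆ t : ℕ, (X (t + 1)).rank)
    (l : ℕ) (hl : d - r ≤ l)
    (Lh : Matrix (Fin (l + 1) × Fin m) (Fin d) ℝ)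
    (Rh : Matrix (Fin d) (Fin (l + 1) × Fin n) ℝ)
    (Bh : Matrix (Fin d) (Fin d) ℝ)
    (hfact : Lh * Rh = blockHankel X 1 l)
    (hshift : Lh * Bh * Rh = blockHankel X 2 l)
    (Ah : Matrix (Fin m) (Fin d) ℝ) (hAh : Ah = Matrix.of fun a c => Lh (0, a) c)
    (Ch : Matrix (Fin d) (Fin n) ℝ) (hCh : Ch = Matrix.of fun c b => Rh c (0, b)) :
    ∀ t : ℕ, X (t + 1) = Ah * Bh ^ t * Ch := by
  have hrA : r ≤ A.rank := hr ▸ iSup_rank_le_rank_left hX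
  have hrC : r ≤ C.rank := hr ▸ iSup_rank_le_rank_right hX
  have hO : ∃ G : Matrix (Fin d) (Fin (l + 1) × Fin m) ℝ, G * krylovRows A B (l + 1) = 1 :=
    exists_mul_krylovRows_eq_one (hctrl.trans (Fintype.card_fin d).symm)
      (by rw [Fintype.card_fin]; omega)
  have hQ : ∃ G : Matrix (Fin (l + 1) × Fin n) (Fin d) ℝ, krylovCols B C (l + 1) * G = 1 :=
    exists_krylovCols_mul_eq_one (hobs.trans (Fintype.card_fin d).symm)
      (by rw [Fintype.card_fin]; omega)
  have hH1 := blockHankel_eq_krylovRows_mul_krylovCols hX 0 l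
  have hH2 := blockHankel_eq_krylovRows_mul_krylovCols hX 1 l
  rw [pow_zero, Matrix.mul_one] at hH1
  rw [pow_one] at hH2
  obtain ⟨T, hL, hR, hB⟩ :=
    exists_similarity_of_factorizations hO hQ (hfact.trans hH1) (hshift.trans hH2)
  have hAT : Ah = A * (T : Matrix (Fin d) (Fin d) ℝ) := by
    ext a c
    rw [hAh, of_apply, hL, krylovRows_mul_apply]
    simp
  have hCT : Ch = (↑T⁻¹ : Matrix (Fin d) (Fin d) ℝ) * C := by
    ext c b
    rw [hCh, of_apply, hR, mul_krylovCols_apply]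
    simp
  intro t
  rw [hX, hAT, hCT, hB, Units.conj_pow']
  simp [Matrix.mul_assoc]

/-- **Lemma 1 (reconstruction statement).**
Let `X(1), X(2), …` admit a minimal realization of dimension `d`, let
`r = sup_{t ≥ 1} rank X(t)` and `l ≥ d - r`. If `Lh·Rh = H^(1;l)` and `Lh·Bh·Rh = H^(2;l)`,
and `Ah` (resp. `Ch`) is the matrix of the first `m` rows of `Lh` (resp. first `n` columns
of `Rh`), then `X(t+1) = Ah·Bh^t·Ch` for all `t ≥ 0`: a complete minimal model of the system
is obtained from the observations `X(1), …, X(2l+2)` via any rank-`d` factorization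
of `H^(1;l)`. -/
theorem hoKalman_reconstruction (m n d : ℕ) (hm : 0 < m) (hn : 0 < n) (hd : 0 < d)
    (X : ℕ → Matrix (Fin m) (Fin n) ℝ)
    (A : Matrix (Fin m) (Fin d) ℝ) (B : Matrix (Fin d) (Fin d) ℝ)
    (C : Matrix (Fin d) (Fin n) ℝ)
    (hX : ∀ t : ℕ, X (t + 1) = A * B ^ t * C)
    (hctrl : (controllabilityMatrix A B).rank = d)
    (hobs : (observabilityMatrix B C).rank = d)
    (r : ℕ) (hr : r = ⨆ t : ℕ, (X (t + 1)).rank)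
    (l : ℕ) (hl : d - r ≤ l)
    (Lh : Matrix (Fin (l + 1) × Fin m) (Fin d) ℝ)
    (Rh : Matrix (Fin d) (Fin (l + 1) × Fin n) ℝ)
    (Bh : Matrix (Fin d) (Fin d) ℝ)
    (hfact : Lh * Rh = blockHankel X 1 l)
    (hshift : Lh * Bh * Rh = blockHankel X 2 l)
    (Ah : Matrix (Fin m) (Fin d) ℝ) (hAh : Ah = Matrix.of fun a c => Lh (0, a) c)
    (Ch : Matrix (Fin d) (Fin n) ℝ) (hCh : Ch = Matrix.of fun c b => Rh c (0, b)) :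
    ∀ t : ℕ, X (t + 1) = Ah * Bh ^ t * Ch :=
  hoKalman_reconstruction_general m n d X A B C hX hctrl hobs r hr l hl Lh Rh Bh hfact hshift Ah hAh
    Ch hCh
end

section
/- Let a, l, c be positive integers and let A ∈ ℝ^{a×a}, B ∈ ℝ^{a×l}, C ∈ ℝ^{l×a}, D ∈ ℝ^{l×l}. Then there exist matrices Q₀, Q₁, …, Q_l ∈ ℝ^{a×a}, depending only on A, B, C, D, such that for every choice of initial matrices X₀ ∈ ℝ^{a×c}, Y₀ ∈ ℝ^{l×c}, the sequences defined by X_{n+1} = A·X_n + B·Y_n and Y_{n+1} = C·X_n + D·Y_n satisfy X_{n+l+1} = Σ_{i=0}^{l} Q_i·X_{n+i} for all n ≥ 0. That is, the observed block satisfies a matrix-coefficient linear recurrence of order l+1 whose order equals the number of latent dimensions plus one, obtained by eliminating Y via the Cayley–Hamilton theorem applied to D. -/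
/-!
Unrolling the latent recursion gives
`Y (n + k) = D ^ k * Y n + ∑ j < k, D ^ (k - 1 - j) * C * X (n + j)`.
Weighting by the coefficients `p k` of any polynomial annihilating `D` (e.g. its characteristic
polynomial, by Cayley–Hamilton) and summing over `k`, the free terms add up to `p(D) * Y n = 0`,
so `B * ∑ k, p k • Y (n + k)` is a combination of the `X (n + j)` alone. Substituting
`B * Y (n + k) = X (n + k + 1) - A * X (n + k)` and using that the characteristic polynomial is
monic of degree `l` isolates `X (n + l + 1)`.
-/

open Finset Polynomial

namespace Matrix

variable {R : Type*} {m n o : Type*} [Fintype m]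

theorem eq_pow_mul_add_sum_of_succ_eq [Semiring R] [DecidableEq m]
    {D : Matrix m m R} {Y U : ℕ → Matrix m o R}
    (hY : ∀ t, Y (t + 1) = D * Y t + U t) (t k : ℕ) :
    Y (t + k) = D ^ k * Y t + ∑ j ∈ range k, D ^ (k - 1 - j) * U (t + j) := by
  induction k with
  | zero => simp
  | succ k ih =>
    rw [← add_assoc, hY, ih, Matrix.mul_add, Matrix.mul_sum, sum_range_succ, ← Matrix.mul_assoc,
      ← pow_succ', Nat.add_sub_cancel, Nat.sub_self, pow_zero, Matrix.one_mul, add_assoc]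
    congr 2
    refine sum_congr rfl fun j hj => ?_
    rw [← Matrix.mul_assoc, ← pow_succ']
    congr 2
    have := mem_range.1 hj
    omega

theorem sum_coeff_smul_eq_of_aeval_eq_zero [CommSemiring R] [DecidableEq m]
    {D : Matrix m m R} {Y U : ℕ → Matrix m o R} (hY : ∀ t, Y (t + 1) = D * Y t + U t)
    {q : R[X]} (hq : aeval D q = 0) {N : ℕ} (hN : q.natDegree < N) (t : ℕ) :
    ∑ k ∈ range N, q.coeff k • Y (t + k) =
      ∑ j ∈ range N, (∑ k ∈ Ico (j + 1) N, q.coeff k • D ^ (k - 1 - j)) * U (t + j) := by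
  have hfree : ∑ k ∈ range N, q.coeff k • (D ^ k * Y t) = 0 := by
    simp_rw [← Matrix.smul_mul, ← Matrix.sum_mul, ← aeval_eq_sum_range' hN, hq,
      Matrix.zero_mul]
  calc ∑ k ∈ range N, q.coeff k • Y (t + k)
      = ∑ k ∈ range N, ∑ j ∈ range k, q.coeff k • (D ^ (k - 1 - j) * U (t + j)) := by
        simp_rw [eq_pow_mul_add_sum_of_succ_eq hY t, smul_add, sum_add_distrib, hfree, zero_add,
          smul_sum]
    _ = ∑ j ∈ range N, ∑ k ∈ Ico (j + 1) N,
          q.coeff k • (D ^ (k - 1 - j) * U (t + j)) := by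
        simp only [range_eq_Ico]
        exact (sum_Ico_Ico_comm' 0 N _).symm
    _ = _ := by simp_rw [Matrix.sum_mul, Matrix.smul_mul]

theorem sum_coeff_smul_succ_eq_of_aeval_eq_zero [CommSemiring R] [DecidableEq m] [Fintype n]
    {A : Matrix n n R} {B : Matrix n m R} {C : Matrix m n R} {D : Matrix m m R}
    {X : ℕ → Matrix n o R} {Y : ℕ → Matrix m o R}
    (hX : ∀ t, X (t + 1) = A * X t + B * Y t) (hY : ∀ t, Y (t + 1) = C * X t + D * Y t)
    {q : R[X]} (hq : aeval D q = 0) {N : ℕ} (hN : q.natDegree < N) (t : ℕ) :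
    ∑ k ∈ range N, q.coeff k • X (t + k + 1) =
      ∑ j ∈ range N,
        (q.coeff j • A + B * (∑ k ∈ Ico (j + 1) N, q.coeff k • D ^ (k - 1 - j)) * C) *
          X (t + j) := by
  have hY' : ∀ t, Y (t + 1) = D * Y t + C * X t := fun t => by rw [hY, add_comm]
  have hlatent := sum_coeff_smul_eq_of_aeval_eq_zero hY' hq hN t
  calc ∑ k ∈ range N, q.coeff k • X (t + k + 1)
      = ∑ k ∈ range N, q.coeff k • (A * X (t + k)) +
          B * ∑ k ∈ range N, q.coeff k • Y (t + k) := by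
        simp_rw [hX, smul_add, sum_add_distrib, Matrix.mul_sum, Matrix.mul_smul]
    _ = _ := by
        rw [hlatent, Matrix.mul_sum, ← sum_add_distrib]
        refine sum_congr rfl fun j _ => ?_
        rw [Matrix.add_mul, Matrix.smul_mul, Matrix.mul_assoc, Matrix.mul_assoc]

end Matrix

open Matrix

theorem latent_elimination_left_general (a l c : ℕ)
    (A : Matrix (Fin a) (Fin a) ℝ) (B : Matrix (Fin a) (Fin l) ℝ)
    (C : Matrix (Fin l) (Fin a) ℝ) (D : Matrix (Fin l) (Fin l) ℝ) :
    ∃ Q : Fin (l + 1) → Matrix (Fin a) (Fin a) ℝ,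
      ∀ (X : ℕ → Matrix (Fin a) (Fin c) ℝ) (Y : ℕ → Matrix (Fin l) (Fin c) ℝ),
        (∀ n : ℕ, X (n + 1) = A * X n + B * Y n) →
        (∀ n : ℕ, Y (n + 1) = C * X n + D * Y n) →
        ∀ n : ℕ, X (n + l + 1) = ∑ i : Fin (l + 1), Q i * X (n + (i : ℕ)) := by
  have hdeg : D.charpoly.natDegree = l := by
    rw [charpoly_natDegree_eq_dim, Fintype.card_fin]
  have hlead : D.charpoly.coeff l = 1 := by
    rw [← D.charpoly_monic.coeff_natDegree, hdeg]
  -- `(X * charpoly D).coeff i` is the weight `p (i - 1)` of the shifted sum, and `0` at `i = 0`.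
  set Q : ℕ → Matrix (Fin a) (Fin a) ℝ := fun i =>
    D.charpoly.coeff i • A
      + B * (∑ k ∈ Ico (i + 1) (l + 1), D.charpoly.coeff k • D ^ (k - 1 - i)) * C
      - (Polynomial.X * D.charpoly).coeff i • 1
  refine ⟨fun i => Q i, fun X Y hX hY n => ?_⟩
  have hsum := sum_coeff_smul_succ_eq_of_aeval_eq_zero hX hY (aeval_self_charpoly D)
    (N := l + 1) (by omega) n
  rw [sum_range_succ, hlead, one_smul] at hsum
  have hshift : ∑ k ∈ range l, D.charpoly.coeff k • X (n + k + 1) =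
      ∑ i ∈ range (l + 1), (Polynomial.X * D.charpoly).coeff i • X (n + i) := by
    simp [sum_range_succ', coeff_X_mul, add_assoc]
  rw [Fin.sum_univ_eq_sum_range (fun i => Q i * X (n + i))]
  simp only [Q, Matrix.sub_mul, sum_sub_distrib, Matrix.smul_mul _ (1 : Matrix _ _ ℝ),
    Matrix.one_mul]
  rw [← hsum, ← hshift, add_sub_cancel_left]

/-- **Cayley–Hamilton elimination of the latent block (left-acting version).**
Given `A ∈ ℝ^{a×a}`, `B ∈ ℝ^{a×l}`, `C ∈ ℝ^{l×a}`, `D ∈ ℝ^{l×l}`, there exist matrices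
`Q₀, …, Q_l ∈ ℝ^{a×a}`, depending only on `A, B, C, D`, such that for every pair of
sequences satisfying `X_{n+1} = A·X_n + B·Y_n`, `Y_{n+1} = C·X_n + D·Y_n` (with arbitrary
initial `X₀, Y₀`), the observed block satisfies the order-`(l+1)` recurrence
`X_{n+l+1} = Σ_{i=0}^{l} Q_i·X_{n+i}` for all `n ≥ 0`. -/
theorem latent_elimination_left (a l c : ℕ) (ha : 0 < a) (hl : 0 < l) (hc : 0 < c)
    (A : Matrix (Fin a) (Fin a) ℝ) (B : Matrix (Fin a) (Fin l) ℝ)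
    (C : Matrix (Fin l) (Fin a) ℝ) (D : Matrix (Fin l) (Fin l) ℝ) :
    ∃ Q : Fin (l + 1) → Matrix (Fin a) (Fin a) ℝ,
      ∀ (X : ℕ → Matrix (Fin a) (Fin c) ℝ) (Y : ℕ → Matrix (Fin l) (Fin c) ℝ),
        (∀ n : ℕ, X (n + 1) = A * X n + B * Y n) →
        (∀ n : ℕ, Y (n + 1) = C * X n + D * Y n) →
        ∀ n : ℕ, X (n + l + 1) = ∑ i : Fin (l + 1), Q i * X (n + (i : ℕ)) :=
  latent_elimination_left_general a l c A B C D
end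

section
/- Let a, l, c be positive integers and let A ∈ ℝ^{a×a}, B ∈ ℝ^{a×l}, C ∈ ℝ^{l×a}, D ∈ ℝ^{l×l}. Then there exist matrices Q′₀, Q′₁, …, Q′_l ∈ ℝ^{a×a}, depending only on A, B, C, D, such that for every choice of initial matrices X₀ ∈ ℝ^{c×a}, Z₀ ∈ ℝ^{c×l}, the sequences defined by X_{n+1} = X_n·A + Z_n·C and Z_{n+1} = X_n·B + Z_n·D satisfy X_{n+l+1} = Σ_{i=0}^{l} X_{n+i}·Q′_i for all n ≥ 0. That is, the right-acting (column) analogue of the Cayley–Hamilton elimination holds: the observed block satisfies a matrix-coefficient linear recurrence of order l+1 with coefficients acting on the right. -/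
/-!
Let `p` be the characteristic polynomial of `D`, monic of degree `l`. Applying the shift
polynomial `p` to the latent recurrence `Z_{n+1} = X_n·B + Z_n·D`, the homogeneous part
`Z_n·p(D)` vanishes by Cayley–Hamilton, so `∑ₖ pₖ Z_{n+k}` is a combination of
`X_n, …, X_{n+l}` alone. Substituting this into
`∑ₖ pₖ X_{n+k+1} = (∑ₖ pₖ X_{n+k})·A + (∑ₖ pₖ Z_{n+k})·C` and isolating the leading term
`X_{n+l+1}` gives the recurrence.
-/

open Finset Polynomial

section

variable {R : Type*} [CommRing R] {m ι κ : Type*} [Fintype ι] [Fintype κ] [DecidableEq κ]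

theorem sum_coeff_smul_shift_eq {M : Type*} [AddCommMonoid M] [Module R M]
    (q : R[X]) (x : ℕ → M) (n N : ℕ) :
    ∑ k ∈ range (N + 1), q.coeff k • x (n + k + 1) =
      ∑ k ∈ range (N + 1), (X * q).coeff k • x (n + k) + q.coeff N • x (n + N + 1) := by
  rw [sum_range_succ, sum_range_succ' _ N]
  simp only [coeff_X_mul, coeff_X_mul_zero, zero_smul, add_zero, add_assoc]

theorem aeval_eq_mul_aeval_divX_add (D : Matrix κ κ R) (q : R[X]) :
    aeval D q = D * aeval D q.divX + q.coeff 0 • 1 := by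
  have h := congrArg (aeval D) (X_mul_divX_add q)
  rw [map_add, map_mul, aeval_X, aeval_C, Algebra.algebraMap_eq_smul_one] at h
  exact h.symm

theorem sum_coeff_smul_driven_eq {y z : ℕ → Matrix m κ R} {D : Matrix κ κ R}
    (hz : ∀ n, z (n + 1) = y n + z n * D) {N : ℕ} (q : R[X]) (hq : q.degree < N) (n : ℕ) :
    ∑ k ∈ range N, q.coeff k • z (n + k) =
      z n * aeval D q + ∑ j ∈ range N, y (n + j) * aeval D (divX^[j + 1] q) := by
  induction N generalizing q n with
  | zero =>
    rw [Nat.cast_zero, Nat.WithBot.lt_zero_iff, degree_eq_bot] at hq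
    simp [hq]
  | succ N ih =>
    have hdivX : q.divX.degree < N := by
      rw [degree_lt_iff_coeff_zero] at hq ⊢
      intro k hk
      rw [coeff_divX]
      exact hq _ (by omega)
    have hshift := ih q.divX hdivX (n + 1)
    simp only [coeff_divX, ← Function.iterate_succ_apply, Nat.add_right_comm n 1] at hshift
    rw [sum_range_succ', sum_range_succ' (fun j => y (n + j) * _)]
    simp only [add_zero, zero_add, Function.iterate_one, ← add_assoc] at hshift ⊢
    rw [hshift, hz, aeval_eq_mul_aeval_divX_add D q]
    simp only [Matrix.add_mul, Matrix.mul_add, Matrix.mul_assoc, Matrix.mul_smul, Matrix.mul_one]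
    abel

/-- `divX^[i + 1] p` is the quotient of `p` by `X ^ (i + 1)`, and `(X * p).coeff i` is
`p.coeff (i - 1)` for `i > 0` and `0` for `i = 0`. -/
noncomputable def latentEliminationCoeff [DecidableEq ι] (A : Matrix ι ι R) (B : Matrix ι κ R)
    (C : Matrix κ ι R) (D : Matrix κ κ R) (i : ℕ) : Matrix ι ι R :=
  D.charpoly.coeff i • A + B * aeval D (divX^[i + 1] D.charpoly) * C -
    (X * D.charpoly).coeff i • 1

theorem observed_eq_sum_mul_latentEliminationCoeff [Nontrivial R] [DecidableEq ι]
    {A : Matrix ι ι R} {B : Matrix ι κ R} {C : Matrix κ ι R} {D : Matrix κ κ R}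
    {x : ℕ → Matrix m ι R} {z : ℕ → Matrix m κ R}
    (hx : ∀ n, x (n + 1) = x n * A + z n * C) (hz : ∀ n, z (n + 1) = x n * B + z n * D) (n : ℕ) :
    x (n + Fintype.card κ + 1) =
      ∑ i ∈ range (Fintype.card κ + 1), x (n + i) * latentEliminationCoeff A B C D i := by
  set l := Fintype.card κ
  set p := D.charpoly
  have hmonic : p.coeff l = 1 := by
    simpa [p, l, Matrix.charpoly_natDegree_eq_dim] using (Matrix.charpoly_monic D).coeff_natDegree
  have hdeg : p.degree < ↑(l + 1) := by
    rw [Matrix.charpoly_degree_eq_dim]; exact_mod_cast Nat.lt_succ_self l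
  have hlatent : ∑ k ∈ range (l + 1), p.coeff k • z (n + k) =
      ∑ j ∈ range (l + 1), x (n + j) * B * aeval D (divX^[j + 1] p) := by
    rw [sum_coeff_smul_driven_eq hz p hdeg, Matrix.aeval_self_charpoly, Matrix.mul_zero, zero_add]
  have hobserved : ∑ k ∈ range (l + 1), p.coeff k • x (n + k + 1) =
      (∑ k ∈ range (l + 1), p.coeff k • x (n + k)) * A +
        (∑ k ∈ range (l + 1), p.coeff k • z (n + k)) * C := by
    simp only [hx, smul_add, sum_add_distrib, Matrix.sum_mul, Matrix.smul_mul]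
  rw [sum_coeff_smul_shift_eq, hmonic, one_smul, hlatent] at hobserved
  simp only [latentEliminationCoeff, Matrix.mul_add, Matrix.mul_sub, sum_add_distrib,
    sum_sub_distrib, Matrix.mul_smul, Matrix.mul_one, Matrix.sum_mul, Matrix.smul_mul,
    ← Matrix.mul_assoc] at hobserved ⊢
  rw [← hobserved]
  abel

end

theorem latent_elimination_right_general (a l c : ℕ)
    (A : Matrix (Fin a) (Fin a) ℝ) (B : Matrix (Fin a) (Fin l) ℝ)
    (C : Matrix (Fin l) (Fin a) ℝ) (D : Matrix (Fin l) (Fin l) ℝ) :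
    ∃ Q' : Fin (l + 1) → Matrix (Fin a) (Fin a) ℝ,
      ∀ (X : ℕ → Matrix (Fin c) (Fin a) ℝ) (Z : ℕ → Matrix (Fin c) (Fin l) ℝ),
        (∀ n : ℕ, X (n + 1) = X n * A + Z n * C) →
        (∀ n : ℕ, Z (n + 1) = X n * B + Z n * D) →
        ∀ n : ℕ, X (n + l + 1) = ∑ i : Fin (l + 1), X (n + (i : ℕ)) * Q' i := by
  refine ⟨fun i => latentEliminationCoeff A B C D i, fun X Z hX hZ n => ?_⟩
  have h := observed_eq_sum_mul_latentEliminationCoeff hX hZ n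
  rw [Fintype.card_fin] at h
  rw [h, Fin.sum_univ_eq_sum_range (fun i => X (n + i) * latentEliminationCoeff A B C D i)]

/-- **Cayley–Hamilton elimination of the latent block (right-acting / column version).**
Given `A ∈ ℝ^{a×a}`, `B ∈ ℝ^{a×l}`, `C ∈ ℝ^{l×a}`, `D ∈ ℝ^{l×l}`, there exist matrices
`Q′₀, …, Q′_l ∈ ℝ^{a×a}`, depending only on `A, B, C, D`, such that for every pair of
sequences satisfying `X_{n+1} = X_n·A + Z_n·C`, `Z_{n+1} = X_n·B + Z_n·D` (with arbitrary
initial `X₀ ∈ ℝ^{c×a}`, `Z₀ ∈ ℝ^{c×l}`), the observed block satisfies the order-`(l+1)`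
recurrence `X_{n+l+1} = Σ_{i=0}^{l} X_{n+i}·Q′_i` for all `n ≥ 0`. -/
theorem latent_elimination_right (a l c : ℕ) (ha : 0 < a) (hl : 0 < l) (hc : 0 < c)
    (A : Matrix (Fin a) (Fin a) ℝ) (B : Matrix (Fin a) (Fin l) ℝ)
    (C : Matrix (Fin l) (Fin a) ℝ) (D : Matrix (Fin l) (Fin l) ℝ) :
    ∃ Q' : Fin (l + 1) → Matrix (Fin a) (Fin a) ℝ,
      ∀ (X : ℕ → Matrix (Fin c) (Fin a) ℝ) (Z : ℕ → Matrix (Fin c) (Fin l) ℝ),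
        (∀ n : ℕ, X (n + 1) = X n * A + Z n * C) →
        (∀ n : ℕ, Z (n + 1) = X n * B + Z n * D) →
        ∀ n : ℕ, X (n + l + 1) = ∑ i : Fin (l + 1), X (n + (i : ℕ)) * Q' i :=
  latent_elimination_right_general a l c A B C D
end

section
/- Let X : ℕ → ℝ^{m×n} be a sequence of real matrices, and suppose there exist matrices Q₀, …, Q_l ∈ ℝ^{m×m} and Q′₀, …, Q′_l ∈ ℝ^{n×n} such that for all t ≥ 0 both X(t+l+1) = Σ_{i=0}^{l} Q_i·X(t+i) and X(t+l+1) = Σ_{i=0}^{l} X(t+i)·Q′_i hold. Then for every k ≥ 0, the block Hankel matrix H^(0;l+k) (whose (i,j) block is X(i+j) for 0 ≤ i,j ≤ l+k) has the same rank as H^(0;l). That is, two-sided matrix-coefficient recurrences of order l+1 imply that the ranks of the block Hankel matrices stabilize at size l+1. -/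
open Matrix Submodule

/-- Matrices with the same row span have the same rank. -/
lemma rank_eq_of_rows_span_eq {α β γ : Type*} [Fintype α] [Fintype β] [Fintype γ]
    (A : Matrix α γ ℝ) (B : Matrix β γ ℝ)
    (h : Submodule.span ℝ (Set.range A) = Submodule.span ℝ (Set.range B)) :
    A.rank = B.rank := by
  rw [Matrix.rank_eq_finrank_span_row, Matrix.rank_eq_finrank_span_row, show A.row = A from rfl,
    show B.row = B from rfl, h]

/-- Matrices with the same column span have the same rank. -/
lemma rank_eq_of_cols_span_eq {α γ δ : Type*} [Fintype α] [Fintype γ] [Fintype δ]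
    (A : Matrix α γ ℝ) (B : Matrix α δ ℝ)
    (h : Submodule.span ℝ (Set.range Aᵀ) = Submodule.span ℝ (Set.range Bᵀ)) :
    A.rank = B.rank := by
  rw [Matrix.rank_eq_finrank_span_cols, Matrix.rank_eq_finrank_span_cols, show A.col = Aᵀ from rfl,
    show B.col = Bᵀ from rfl, h]

/-- The block Hankel matrix `H^(0;k)` of a sequence of `m×n` matrices `X(0), X(1), …`:
the `(k+1)×(k+1)` block matrix whose `(i,j)` block is `X(i+j)` for `0 ≤ i,j ≤ k`. -/
def blockHankel0 {m n : ℕ} (X : ℕ → Matrix (Fin m) (Fin n) ℝ) (k : ℕ) :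
    Matrix (Fin (k + 1) × Fin m) (Fin (k + 1) × Fin n) ℝ :=
  Matrix.of fun p q => X ((p.1 : ℕ) + (q.1 : ℕ)) p.2 q.2

/-- **Rank stabilization of block Hankel matrices under two-sided recurrences.**
If a sequence `X : ℕ → ℝ^{m×n}` satisfies both a left matrix-coefficient recurrence
`X(t+l+1) = Σ_{i=0}^{l} Q_i·X(t+i)` and a right one `X(t+l+1) = Σ_{i=0}^{l} X(t+i)·Q′_i`
for all `t ≥ 0`, then for every `k ≥ 0` the block Hankel matrix `H^(0;l+k)` has the same
rank as `H^(0;l)`. -/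
theorem blockHankel_rank_stabilizes (m n l : ℕ) (hm : 0 < m) (hn : 0 < n)
    (X : ℕ → Matrix (Fin m) (Fin n) ℝ)
    (Q : Fin (l + 1) → Matrix (Fin m) (Fin m) ℝ)
    (Q' : Fin (l + 1) → Matrix (Fin n) (Fin n) ℝ)
    (hleft : ∀ t : ℕ, X (t + l + 1) = ∑ i : Fin (l + 1), Q i * X (t + (i : ℕ)))
    (hright : ∀ t : ℕ, X (t + l + 1) = ∑ i : Fin (l + 1), X (t + (i : ℕ)) * Q' i) :
    ∀ k : ℕ, (blockHankel0 X (l + k)).rank = (blockHankel0 X l).rank := by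
  -- main step: one more level does not change the rank
  have step : ∀ k : ℕ, (blockHankel0 X (l + k + 1)).rank = (blockHankel0 X (l + k)).rank := by
    intro k
    set N := l + k with hN
    set A : Matrix (Fin (N + 2) × Fin m) (Fin (N + 2) × Fin n) ℝ := blockHankel0 X (N + 1) with hA
    set B : Matrix (Fin (N + 1) × Fin m) (Fin (N + 2) × Fin n) ℝ :=
      A.submatrix (Prod.map Fin.castSucc id) id with hB
    -- Step 1: rows of A span the same space as rows of B
    have h1 : A.rank = B.rank := by
      apply rank_eq_of_rows_span_eq
      apply le_antisymm
      · rw [span_le]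
        rintro _ ⟨⟨i, p⟩, rfl⟩
        induction i using Fin.lastCases with
        | cast i =>
            exact subset_span ⟨(i, p), rfl⟩
        | last =>
            -- the last block row is a combination of rows of B
            have hrow : A (Fin.last (N + 1), p) =
                ∑ i : Fin (l + 1), ∑ p' : Fin m,
                  Q i p p' • B (⟨k + (i : ℕ), by omega⟩, p') := by
              funext jq
              obtain ⟨j, q⟩ := jq
              have := hleft (k + (j : ℕ))
              have hidx : (Fin.last (N + 1) : ℕ) + (j : ℕ) = k + (j : ℕ) + l + 1 := by
                simp [Fin.val_last]; omega
              have hentry := congrFun (congrFun this p) q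
              simp only [Matrix.sum_apply, Matrix.mul_apply] at hentry
              simp only [Finset.sum_apply, Pi.smul_apply, smul_eq_mul]
              calc A (Fin.last (N + 1), p) (j, q)
                  = X (k + (j : ℕ) + l + 1) p q := by
                    show X ((Fin.last (N + 1) : ℕ) + (j : ℕ)) p q = _
                    rw [hidx]
                _ = ∑ i : Fin (l + 1), ∑ p' : Fin m,
                      Q i p p' * X (k + (j : ℕ) + (i : ℕ)) p' q := hentry
                _ = _ := by
                    refine Finset.sum_congr rfl fun i _ => Finset.sum_congr rfl fun p' _ => ?_
                    show Q i p p' * X (k + (j : ℕ) + (i : ℕ)) p' q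
                        = Q i p p' * X (k + (i : ℕ) + (j : ℕ)) p' q
                    rw [show k + (j : ℕ) + (i : ℕ) = k + (i : ℕ) + (j : ℕ) by omega]
            rw [hrow]
            exact sum_mem fun i _ => sum_mem fun p' _ =>
              smul_mem _ _ (subset_span ⟨(⟨k + (i : ℕ), by omega⟩, p'), rfl⟩)
      · rw [span_le]
        rintro _ ⟨⟨i, p⟩, rfl⟩
        exact subset_span ⟨(Fin.castSucc i, p), rfl⟩
    -- Step 2: columns of B span the same as columns of blockHankel0 X N
    have h2 : B.rank = (blockHankel0 X N).rank := by
      have hCB : blockHankel0 X N = B.submatrix id (Prod.map Fin.castSucc id) := by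
        ext ⟨i, p⟩ ⟨j, q⟩
        rfl
      apply rank_eq_of_cols_span_eq
      apply le_antisymm
      · rw [span_le]
        rintro _ ⟨⟨j, q⟩, rfl⟩
        induction j using Fin.lastCases with
        | cast j =>
            refine subset_span ⟨(j, q), ?_⟩
            funext ip
            obtain ⟨i, p⟩ := ip
            rfl
        | last =>
            have hcol : Bᵀ (Fin.last (N + 1), q) =
                ∑ j : Fin (l + 1), ∑ q' : Fin n,
                  Q' j q' q • (blockHankel0 X N)ᵀ (⟨k + (j : ℕ), by omega⟩, q') := by
              funext ip
              obtain ⟨i, p⟩ := ip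
              have := hright ((i : ℕ) + k)
              have hentry := congrFun (congrFun this p) q
              simp only [Matrix.sum_apply, Matrix.mul_apply] at hentry
              simp only [Finset.sum_apply, Pi.smul_apply, smul_eq_mul]
              calc Bᵀ (Fin.last (N + 1), q) (i, p)
                  = X ((i : ℕ) + k + l + 1) p q := by
                    show X ((Fin.castSucc i : ℕ) + (Fin.last (N + 1) : ℕ)) p q = _
                    congr 1
                    simp [Fin.val_last]
                    omega
                _ = ∑ j : Fin (l + 1), ∑ q' : Fin n,
                      X ((i : ℕ) + k + (j : ℕ)) p q' * Q' j q' q := hentry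
                _ = _ := by
                    refine Finset.sum_congr rfl fun j _ => Finset.sum_congr rfl fun q' _ => ?_
                    show X ((i : ℕ) + k + (j : ℕ)) p q' * Q' j q' q
                        = Q' j q' q * X ((i : ℕ) + (k + (j : ℕ))) p q'
                    rw [show (i : ℕ) + k + (j : ℕ) = (i : ℕ) + (k + (j : ℕ)) by omega, mul_comm]
            rw [hcol]
            exact sum_mem fun j _ => sum_mem fun q' _ =>
              smul_mem _ _ (subset_span ⟨(⟨k + (j : ℕ), by omega⟩, q'), rfl⟩)
      · rw [span_le]
        rintro _ ⟨⟨j, q⟩, rfl⟩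
        refine subset_span ⟨(Fin.castSucc j, q), ?_⟩
        funext ip
        obtain ⟨i, p⟩ := ip
        rfl
    exact h1.trans h2
  intro k
  induction k with
  | zero => rfl
  | succ k ih => rw [show l + (k + 1) = l + k + 1 from rfl, step k, ih]
end
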